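/- arXiv:1401.6522 — 3 statements merged into one kernel-verified Lean document; each statement's English description precedes it below -/
import Mathlib

section
/- Let X and M be real Hilbert spaces, let a : X × X → ℝ be a bounded bilinear form which is coercive, i.e. there is α > 0 with a(u,u) ≥ α‖u‖² for all u ∈ X, and let b : X × M → ℝ be a bounded bilinear form satisfying the inf-sup condition: there is μ > 0 such that for every p ∈ M, sup_{u ∈ X, u ≠ 0} b(u,p)/‖u‖ ≥ μ‖p‖. Then for every bounded linear functional f on X there exists a pair (u,p) ∈ X × M such that a(u,v) + b(v,p) = f(v) for all v ∈ X and b(u,q) = 0 for all q ∈ M; moreover there is a constant C > 0, depending only on α, μ and the operator norms of a and b, such that ‖u‖_X + ‖p‖_M ≤ C‖f‖_{X'}. -/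
/-!
Write `b v p = ⟪T p, v⟫` with `T : M → X` given by the Riesz representation. The inf-sup
condition says exactly that `μ ‖p‖ ≤ ‖T p‖`, so `T` has closed range, and since
`ker b = (range T)ᗮ` we get `(ker b)ᗮ = range T`: every functional vanishing on `ker b` is
`b(·, p)` for some `p` with `μ ‖p‖ ≤` its norm. Now solve the coercive problem on the Hilbert
space `ker b` by Lax–Milgram to get `u` with `‖u‖ ≤ ‖f‖ / α`, and take `p` representing
`f - a u`, which vanishes on `ker b`; then `μ ‖p‖ ≤ ‖f‖ + ‖a‖ ‖u‖`.
-/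

open InnerProductSpace

theorem ContinuousLinearMap.isClosed_range_of_mul_norm_le {𝕜 E F : Type*} [Ring 𝕜]
    [NormedAddCommGroup E] [Module 𝕜 E] [CompleteSpace E] [NormedAddCommGroup F] [Module 𝕜 F]
    (T : E →L[𝕜] F) {c : ℝ} (hc : 0 < c) (hT : ∀ x, c * ‖x‖ ≤ ‖T x‖) :
    IsClosed (Set.range T) := by
  refine (T.antilipschitz_of_bound (K := c⁻¹.toNNReal) fun x => ?_).isClosed_range
    T.uniformContinuous
  rw [Real.coe_toNNReal _ (inv_nonneg.2 hc.le), ← div_eq_inv_mul, le_div_iff₀ hc, mul_comm]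
  exact hT x

theorem mul_norm_le_norm_of_mul_norm_sq_le {E : Type*} [NormedAddCommGroup E] [NormedSpace ℝ E]
    {f : StrongDual ℝ E} {α : ℝ} {u : E} (h : α * ‖u‖ ^ 2 ≤ f u) : α * ‖u‖ ≤ ‖f‖ := by
  rcases (norm_nonneg u).eq_or_lt with hu | hu
  · simp [← hu]
  · refine le_of_mul_le_mul_right ?_ hu
    calc α * ‖u‖ * ‖u‖ = α * ‖u‖ ^ 2 := by ring
      _ ≤ f u := h
      _ ≤ ‖f‖ * ‖u‖ := (le_abs_self _).trans (f.le_opNorm u)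

theorem exists_mem_forall_apply_eq_of_coercive {X : Type*} [NormedAddCommGroup X]
    [InnerProductSpace ℝ X] (V : Submodule ℝ X) [CompleteSpace V]
    (a : X →L[ℝ] X →L[ℝ] ℝ) {α : ℝ} (hα : 0 < α) (hcoer : ∀ u ∈ V, α * ‖u‖ ^ 2 ≤ a u u)
    (f : StrongDual ℝ X) : ∃ u ∈ V, ∀ v ∈ V, a u v = f v := by
  have hcoerV : IsCoercive (a.bilinearComp V.subtypeL V.subtypeL) :=
    ⟨α, hα, fun v => by simpa [mul_assoc, ← sq] using hcoer v v.2⟩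
  set E := hcoerV.continuousLinearEquivOfBilin
  set u := E.symm ((toDual ℝ V).symm (f ∘L V.subtypeL))
  refine ⟨u, u.2, fun v hv => ?_⟩
  have := hcoerV.continuousLinearEquivOfBilin_apply u ⟨v, hv⟩
  rw [E.apply_symm_apply, toDual_symm_apply] at this
  exact this.symm

section InfSup

variable {X M : Type*} [NormedAddCommGroup X] [InnerProductSpace ℝ X] [CompleteSpace X]
  [NormedAddCommGroup M] [InnerProductSpace ℝ M]

noncomputable def rieszFlip (b : X →L[ℝ] M →L[ℝ] ℝ) : M →L[ℝ] X :=
  (toDual ℝ X).symm.toContinuousLinearEquiv.toContinuousLinearMap ∘L b.flip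

@[simp]
theorem inner_rieszFlip_apply (b : X →L[ℝ] M →L[ℝ] ℝ) (p : M) (v : X) :
    ⟪rieszFlip b p, v⟫_ℝ = b v p :=
  toDual_symm_apply

theorem iSup_div_norm_le_norm_rieszFlip_apply (b : X →L[ℝ] M →L[ℝ] ℝ) (p : M) :
    ⨆ u : {u : X // u ≠ 0}, b u.1 p / ‖u.1‖ ≤ ‖rieszFlip b p‖ := by
  refine Real.iSup_le (fun ⟨u, hu⟩ => ?_) (norm_nonneg _)
  rw [div_le_iff₀ (norm_pos_iff.2 hu), ← inner_rieszFlip_apply]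
  exact real_inner_le_norm _ _

theorem ker_eq_orthogonal_range_rieszFlip (b : X →L[ℝ] M →L[ℝ] ℝ) :
    b.ker = (rieszFlip b).rangeᗮ := by
  ext v
  simp only [LinearMap.mem_ker, ContinuousLinearMap.coe_coe, Submodule.mem_orthogonal,
    LinearMap.mem_range]
  constructor
  · rintro hv _ ⟨p, rfl⟩
    simp [hv]
  · intro hv
    ext p
    simpa using hv _ ⟨p, rfl⟩

theorem exists_flip_apply_eq_of_infSup [CompleteSpace M] (b : X →L[ℝ] M →L[ℝ] ℝ) {μ : ℝ}
    (hμ : 0 < μ)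
    (hinfsup : ∀ p : M, μ * ‖p‖ ≤ ⨆ u : {u : X // u ≠ 0}, b u.1 p / ‖u.1‖)
    (g : StrongDual ℝ X) (hg : ∀ v ∈ b.ker, g v = 0) :
    ∃ p : M, (∀ v, b v p = g v) ∧ μ * ‖p‖ ≤ ‖g‖ := by
  have hT p : μ * ‖p‖ ≤ ‖rieszFlip b p‖ :=
    (hinfsup p).trans (iSup_div_norm_le_norm_rieszFlip_apply b p)
  have : CompleteSpace (rieszFlip b).range :=
    ((rieszFlip b).isClosed_range_of_mul_norm_le hμ hT).completeSpace_coe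
  have hG : (toDual ℝ X).symm g ∈ b.kerᗮ := by
    rw [Submodule.mem_orthogonal']
    intro v hv
    rw [toDual_symm_apply, hg v hv]
  rw [ker_eq_orthogonal_range_rieszFlip, Submodule.orthogonal_orthogonal] at hG
  obtain ⟨p, hp⟩ := hG
  rw [ContinuousLinearMap.coe_coe] at hp
  refine ⟨p, fun v => ?_, ?_⟩
  · rw [← inner_rieszFlip_apply, hp, toDual_symm_apply]
  · simpa [hp] using hT p

end InfSup

/-- Babuska–Brezzi: existence and stability for a saddle point problem with a
coercive bounded bilinear form `a` and a bounded bilinear form `b` satisfying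
the inf-sup condition. -/
theorem stmt0
    {X M : Type*} [NormedAddCommGroup X] [InnerProductSpace ℝ X] [CompleteSpace X]
    [NormedAddCommGroup M] [InnerProductSpace ℝ M] [CompleteSpace M]
    (a : X →L[ℝ] X →L[ℝ] ℝ) (b : X →L[ℝ] M →L[ℝ] ℝ)
    (α : ℝ) (hα : 0 < α) (hcoer : ∀ u : X, α * ‖u‖ ^ 2 ≤ a u u)
    (μ : ℝ) (hμ : 0 < μ)
    (hinfsup : ∀ p : M, μ * ‖p‖ ≤ ⨆ u : {u : X // u ≠ 0}, b u.1 p / ‖u.1‖) :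
    ∃ C > 0, ∀ f : X →L[ℝ] ℝ, ∃ (u : X) (p : M),
      (∀ v : X, a u v + b v p = f v) ∧ (∀ q : M, b u q = 0) ∧
      ‖u‖ + ‖p‖ ≤ C * ‖f‖ := by
  refine ⟨α⁻¹ + μ⁻¹ * (1 + ‖a‖ * α⁻¹), by positivity, fun f => ?_⟩
  have : CompleteSpace b.ker := b.isClosed_ker.completeSpace_coe
  obtain ⟨u, hu_ker, hu⟩ :=
    exists_mem_forall_apply_eq_of_coercive b.ker a hα (fun u _ => hcoer u) f
  obtain ⟨p, hp, hp_norm⟩ :=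
    exists_flip_apply_eq_of_infSup b hμ hinfsup (f - a u) fun v hv => by simp [hu v hv]
  refine ⟨u, p, fun v => by simp [hp], fun q => by simp [show b u = 0 from hu_ker], ?_⟩
  have hu_le : ‖u‖ ≤ α⁻¹ * ‖f‖ := by
    rw [le_inv_mul_iff₀ hα]
    exact mul_norm_le_norm_of_mul_norm_sq_le ((hcoer u).trans (hu u hu_ker).le)
  have hp_le : ‖p‖ ≤ μ⁻¹ * (‖f‖ + ‖a‖ * ‖u‖) := by
    rw [le_inv_mul_iff₀ hμ]
    exact hp_norm.trans ((norm_sub_le _ _).trans (add_le_add_right (a.le_opNorm u) _))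
  calc ‖u‖ + ‖p‖ ≤ α⁻¹ * ‖f‖ + μ⁻¹ * (‖f‖ + ‖a‖ * (α⁻¹ * ‖f‖)) := by
        gcongr
        exact hp_le.trans (by gcongr)
    _ = (α⁻¹ + μ⁻¹ * (1 + ‖a‖ * α⁻¹)) * ‖f‖ := by ring
end

section
/- There exists a constant C > 0, independent of n, such that for every integer n ≥ 1 and every P : (ZMod n)² → ℝ with Σ_{i,j} P(i,j) = 0, there exist U, V : (ZMod n)² → ℝ satisfying (D₁U + D₂V)(i,j) = P(i,j) for all (i,j), and Σ_{i,j} [(D₁U)² + (D₂U)² + (D₁V)² + (D₂V)²](i,j) ≤ C Σ_{i,j} P(i,j)². -/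
/-!
Take `U = B₁φ`, `V = B₂φ`, the backward-difference gradient of a solution of the discrete
Poisson equation `D₁B₁φ + D₂B₂φ = P`; it is solvable because the kernel of this Laplacian
consists of the constants, so by rank–nullity its range is the hyperplane of mean-zero grid
functions. The field `(U, V)` is discretely curl-free, `B₂U = B₁V`, and for such fields two
summations by parts turn the cross term `2 ∑ D₁U · D₂V` of `∑ (D₁U + D₂V)²` into
`∑ (D₂U)² + ∑ (D₁V)²`. Hence the gradient energy equals `∑ P²` exactly, and `C = 1` works.
-/

/-- Scaled forward difference in the first index on the periodic grid `(ZMod n)²`,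
corresponding to mesh size `h = 1/n`. -/
def D1 (n : ℕ) (W : ZMod n → ZMod n → ℝ) (i j : ZMod n) : ℝ :=
  (n : ℝ) * (W (i + 1) j - W i j)

/-- Scaled forward difference in the second index on the periodic grid `(ZMod n)²`,
corresponding to mesh size `h = 1/n`. -/
def D2 (n : ℕ) (W : ZMod n → ZMod n → ℝ) (i j : ZMod n) : ℝ :=
  (n : ℝ) * (W i (j + 1) - W i j)

open Finset

def B1 (n : ℕ) (W : ZMod n → ZMod n → ℝ) (i j : ZMod n) : ℝ :=
  (n : ℝ) * (W i j - W (i - 1) j)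

def B2 (n : ℕ) (W : ZMod n → ZMod n → ℝ) (i j : ZMod n) : ℝ :=
  (n : ℝ) * (W i j - W i (j - 1))

section Differences

variable {n : ℕ}

lemma B1_eq_D1_sub_one (W : ZMod n → ZMod n → ℝ) (i j : ZMod n) :
    B1 n W i j = D1 n W (i - 1) j := by
  simp only [B1, D1, sub_add_cancel]

lemma B2_eq_D2_sub_one (W : ZMod n → ZMod n → ℝ) (i j : ZMod n) :
    B2 n W i j = D2 n W i (j - 1) := by
  simp only [B2, D2, sub_add_cancel]

lemma B1_D2_comm (W : ZMod n → ZMod n → ℝ) (i j : ZMod n) :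
    B1 n (D2 n W) i j = D2 n (B1 n W) i j := by
  simp only [B1, D2]; ring

lemma B1_B2_comm (W : ZMod n → ZMod n → ℝ) (i j : ZMod n) :
    B1 n (B2 n W) i j = B2 n (B1 n W) i j := by
  simp only [B1, B2]; ring

lemma eq_const_of_B1_eq_zero_of_B2_eq_zero [NeZero n] {W : ZMod n → ZMod n → ℝ}
    (h1 : ∀ i j, B1 n W i j = 0) (h2 : ∀ i j, B2 n W i j = 0) (i j : ZMod n) :
    W i j = W 0 0 := by
  have hn : (n : ℝ) ≠ 0 := Nat.cast_ne_zero.mpr (NeZero.ne n)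
  have step1 : ∀ i j, W i j = W (i - 1) j := fun i j => by
    simpa [B1, hn, sub_eq_zero] using h1 i j
  have step2 : ∀ i j, W i j = W i (j - 1) := fun i j => by
    simpa [B2, hn, sub_eq_zero] using h2 i j
  have const : ∀ g : ZMod n → ℝ, (∀ k, g k = g (k - 1)) → ∀ k, g k = g 0 := by
    intro g hg k
    obtain ⟨m, rfl⟩ := ZMod.natCast_zmod_surjective k
    induction m with
    | zero => simp
    | succ m ih => rw [← ih, hg]; push_cast; ring_nf
  rw [const (W i) (step2 i) j, const (W · 0) (fun k => step1 k 0) i]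

end Differences

section SummationByParts

variable {n : ℕ} [NeZero n]

lemma sum_mul_D1 (f g : ZMod n → ZMod n → ℝ) :
    ∑ i, ∑ j, f i j * D1 n g i j = -∑ i, ∑ j, B1 n f i j * g i j := by
  have shift : ∑ i, ∑ j, f i j * g (i + 1) j = ∑ i, ∑ j, f (i - 1) j * g i j := by
    rw [← (Equiv.subRight (1 : ZMod n)).sum_comp]
    simp
  simp only [D1, B1, mul_sub, sub_mul, sum_sub_distrib, mul_left_comm _ (n : ℝ), mul_assoc,
    ← mul_sum, shift]
  ring

lemma sum_mul_D2 (f g : ZMod n → ZMod n → ℝ) :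
    ∑ i, ∑ j, f i j * D2 n g i j = -∑ i, ∑ j, B2 n f i j * g i j := by
  have shift : ∀ i, ∑ j, f i j * g i (j + 1) = ∑ j, f i (j - 1) * g i j := fun i => by
    rw [← (Equiv.subRight (1 : ZMod n)).sum_comp]
    simp
  simp only [D2, B2, mul_sub, sub_mul, sum_sub_distrib, mul_left_comm _ (n : ℝ), mul_assoc,
    ← mul_sum, shift]
  ring

lemma sum_B1_sq (W : ZMod n → ZMod n → ℝ) :
    ∑ i, ∑ j, B1 n W i j ^ 2 = ∑ i, ∑ j, D1 n W i j ^ 2 := by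
  simp only [B1_eq_D1_sub_one]
  exact (Equiv.subRight (1 : ZMod n)).sum_comp fun i => ∑ j, D1 n W i j ^ 2

lemma sum_B2_sq (W : ZMod n → ZMod n → ℝ) :
    ∑ i, ∑ j, B2 n W i j ^ 2 = ∑ i, ∑ j, D2 n W i j ^ 2 := by
  simp only [B2_eq_D2_sub_one]
  exact sum_congr rfl fun i _ =>
    (Equiv.subRight (1 : ZMod n)).sum_comp fun j => D2 n W i j ^ 2

end SummationByParts

section Energy

variable {n : ℕ} [NeZero n]

lemma sum_grad_sq_eq_sum_div_sq_of_B2_eq_B1 {U V : ZMod n → ZMod n → ℝ}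
    (hcurl : ∀ i j, B2 n U i j = B1 n V i j) :
    ∑ i, ∑ j, (D1 n U i j ^ 2 + D2 n U i j ^ 2 + D1 n V i j ^ 2 + D2 n V i j ^ 2)
      = ∑ i, ∑ j, (D1 n U i j + D2 n V i j) ^ 2 := by
  have cross : ∑ i, ∑ j, D1 n U i j * D2 n V i j = ∑ i, ∑ j, B1 n V i j ^ 2 :=
    calc ∑ i, ∑ j, D1 n U i j * D2 n V i j
        = ∑ i, ∑ j, D2 n V i j * D1 n U i j := by simp only [mul_comm]
      _ = -∑ i, ∑ j, U i j * D2 n (B1 n V) i j := by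
        rw [sum_mul_D1]; simp only [B1_D2_comm, mul_comm]
      _ = ∑ i, ∑ j, B1 n V i j ^ 2 := by simp only [sum_mul_D2, neg_neg, hcurl, sq]
  have hU : ∑ i, ∑ j, D2 n U i j ^ 2 = ∑ i, ∑ j, B1 n V i j ^ 2 := by
    simp only [← sum_B2_sq, hcurl]
  simp only [add_sq, sum_add_distrib, mul_assoc, ← mul_sum, cross, hU, ← sum_B1_sq V]
  ring

end Energy

section Poisson

variable (n : ℕ)

def lap : (ZMod n → ZMod n → ℝ) →ₗ[ℝ] (ZMod n → ZMod n → ℝ) where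
  toFun φ i j := D1 n (B1 n φ) i j + D2 n (B2 n φ) i j
  map_add' φ ψ := by
    funext i j
    simp only [D1, D2, B1, B2, Pi.add_apply]
    ring
  map_smul' c φ := by
    funext i j
    simp only [D1, D2, B1, B2, Pi.smul_apply, smul_eq_mul, RingHom.id_apply]
    ring

def gridSum [NeZero n] : (ZMod n → ZMod n → ℝ) →ₗ[ℝ] ℝ where
  toFun f := ∑ i, ∑ j, f i j
  map_add' f g := by simp only [Pi.add_apply, sum_add_distrib]
  map_smul' c f := by simp only [Pi.smul_apply, smul_eq_mul, mul_sum, RingHom.id_apply]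

variable {n} [NeZero n]

lemma sum_D1 (W : ZMod n → ZMod n → ℝ) : ∑ i, ∑ j, D1 n W i j = 0 := by
  simpa [B1] using sum_mul_D1 (fun _ _ => 1) W

lemma sum_D2 (W : ZMod n → ZMod n → ℝ) : ∑ i, ∑ j, D2 n W i j = 0 := by
  simpa [B2] using sum_mul_D2 (fun _ _ => 1) W

lemma range_lap_le_ker_gridSum : LinearMap.range (lap n) ≤ LinearMap.ker (gridSum n) := by
  rintro _ ⟨φ, rfl⟩
  simp [lap, gridSum, sum_add_distrib, sum_D1, sum_D2]

lemma sum_mul_lap (φ : ZMod n → ZMod n → ℝ) :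
    ∑ i, ∑ j, φ i j * lap n φ i j
      = -(∑ i, ∑ j, B1 n φ i j ^ 2 + ∑ i, ∑ j, B2 n φ i j ^ 2) := by
  simp only [lap, LinearMap.coe_mk, AddHom.coe_mk, mul_add, sum_add_distrib, sum_mul_D1,
    sum_mul_D2, sq]
  ring

lemma eq_zero_of_sum_sq_eq_zero {W : ZMod n → ZMod n → ℝ} (h : ∑ i, ∑ j, W i j ^ 2 = 0) :
    ∀ i j, W i j = 0 := by
  simpa [sum_eq_zero_iff_of_nonneg, sum_nonneg, sq_nonneg] using h

lemma ker_lap_le_span_one : LinearMap.ker (lap n) ≤ ℝ ∙ fun _ _ => 1 := by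
  intro φ hφ
  have hsq := sum_mul_lap φ
  simp only [LinearMap.mem_ker.mp hφ, Pi.zero_apply, mul_zero, sum_const_zero,
    zero_eq_neg] at hsq
  obtain ⟨hB1, hB2⟩ := (add_eq_zero_iff_of_nonneg (by positivity) (by positivity)).mp hsq
  have hconst := eq_const_of_B1_eq_zero_of_B2_eq_zero
    (eq_zero_of_sum_sq_eq_zero hB1) (eq_zero_of_sum_sq_eq_zero hB2)
  exact Submodule.mem_span_singleton.mpr ⟨φ 0 0, funext₂ fun i j => by simp [hconst i j]⟩

lemma range_gridSum_eq_top : LinearMap.range (gridSum n) = ⊤ := by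
  refine LinearMap.range_eq_top.mpr fun r => ⟨fun _ _ => r / (n * n), ?_⟩
  have hn : (n : ℝ) ≠ 0 := Nat.cast_ne_zero.mpr (NeZero.ne n)
  simp only [gridSum, LinearMap.coe_mk, AddHom.coe_mk, sum_const, card_univ, ZMod.card,
    nsmul_eq_mul]
  field_simp

lemma range_lap_eq_ker_gridSum : LinearMap.range (lap n) = LinearMap.ker (gridSum n) := by
  refine Submodule.eq_of_le_of_finrank_le range_lap_le_ker_gridSum ?_
  have hker : Module.finrank ℝ (LinearMap.ker (lap n)) ≤ 1 :=
    (Submodule.finrank_mono ker_lap_le_span_one).trans <|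
      (finrank_span_le_card _).trans_eq (by simp)
  have hsum := (gridSum n).finrank_range_add_finrank_ker
  have hlap := (lap n).finrank_range_add_finrank_ker
  rw [range_gridSum_eq_top, finrank_top, Module.finrank_self] at hsum
  omega

end Poisson

/-- Every mean-zero discrete pressure `P` on the periodic grid is the MAC discrete
divergence of a discrete velocity field `(U, V)` whose discrete gradient is bounded by
`C` times the `l²` norm of `P`, with `C` independent of the mesh size. -/
theorem stmt8 :
    ∃ C > (0 : ℝ), ∀ (n : ℕ) [NeZero n], ∀ P : ZMod n → ZMod n → ℝ,
      (∑ i : ZMod n, ∑ j : ZMod n, P i j) = 0 →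
      ∃ U V : ZMod n → ZMod n → ℝ,
        (∀ i j : ZMod n, D1 n U i j + D2 n V i j = P i j) ∧
        (∑ i : ZMod n, ∑ j : ZMod n,
            ((D1 n U i j) ^ 2 + (D2 n U i j) ^ 2 + (D1 n V i j) ^ 2 + (D2 n V i j) ^ 2))
          ≤ C * ∑ i : ZMod n, ∑ j : ZMod n, (P i j) ^ 2 := by
  refine ⟨1, one_pos, fun n _ P hP => ?_⟩
  obtain ⟨φ, hφ⟩ : P ∈ LinearMap.range (lap n) := by
    rw [range_lap_eq_ker_gridSum]; exact hP
  have hdiv : ∀ i j, D1 n (B1 n φ) i j + D2 n (B2 n φ) i j = P i j := fun i j =>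
    congrFun₂ hφ i j
  refine ⟨B1 n φ, B2 n φ, hdiv, ?_⟩
  rw [sum_grad_sq_eq_sum_div_sq_of_B2_eq_B1 fun i j => (B1_B2_comm φ i j).symm, one_mul]
  simp only [hdiv, le_refl]
end

section
/- There exists a constant C > 0, independent of n, such that for every integer n ≥ 1 and every E : (ZMod n)² → ℝ with Σ_{i,j} E(i,j) = 0, one has the discrete Poincaré inequality Σ_{i,j} E(i,j)² ≤ C Σ_{i,j} [(D₁E)² + (D₂E)²](i,j). -/
/-!
For mean-zero `E` on a set of `N` points, `∑ E² = (2N)⁻¹ ∑_{p,q} (E p - E q)²`. On the grid,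
join `p = (i,j)` to `q = (k,l)` by a horizontal and then a vertical path, each of fewer than `n`
steps; Cauchy–Schwarz along the paths gives
`n (E p - E q)² ≤ 2 (∑_a D₁E(a,j)² + ∑_b D₂E(k,b)²)`, and summing over all pairs yields the
inequality with `C = 1`.
-/

open Finset

theorem Finset.sum_sum_sub_sq {ι R : Type*} [CommRing R] (s : Finset ι) (f : ι → R) :
    ∑ i ∈ s, ∑ j ∈ s, (f i - f j) ^ 2 = 2 * (#s * ∑ i ∈ s, f i ^ 2 - (∑ i ∈ s, f i) ^ 2) := by
  simp only [sub_sq, sum_add_distrib, sum_sub_distrib, sum_const, nsmul_eq_mul, ← mul_sum,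
    ← sum_mul]
  ring

theorem ZMod.sum_range_natCast {M : Type*} [AddCommMonoid M] (n : ℕ) [NeZero n]
    (φ : ZMod n → M) : ∑ m ∈ range n, φ m = ∑ a, φ a :=
  sum_nbij' (fun m => (m : ZMod n)) ZMod.val (by simp) (fun a _ => by simpa using ZMod.val_lt a)
    (fun m hm => ZMod.val_cast_of_lt (mem_range.mp hm)) (fun a _ => ZMod.natCast_zmod_val a)
    (fun _ _ => rfl)

theorem ZMod.sq_sub_le_mul_sum_sq_sub {n : ℕ} [NeZero n] (f : ZMod n → ℝ) (i k : ZMod n) :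
    (f i - f k) ^ 2 ≤ n * ∑ a, (f (a + 1) - f a) ^ 2 := by
  set d : ZMod n → ℝ := fun a => f (a + 1) - f a
  set t := (i - k).val
  have ht : t ≤ n := (ZMod.val_lt _).le
  have htelescope : f i - f k = ∑ m ∈ range t, d (k + m) := by
    have := sum_range_sub (fun m : ℕ => f (k + m)) t
    simp only [ZMod.natCast_zmod_val, t, Nat.cast_zero, add_zero, add_sub_cancel] at this
    rw [← this]
    refine sum_congr rfl fun m _ => ?_
    simp only [d, Nat.cast_succ, add_assoc]
  calc (f i - f k) ^ 2 ≤ t * ∑ m ∈ range t, d (k + m) ^ 2 := by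
        simpa [htelescope] using sq_sum_le_card_mul_sum_sq (s := range t) (f := fun m => d (k + m))
    _ ≤ n * ∑ m ∈ range n, d (k + m) ^ 2 := by gcongr
    _ = n * ∑ a, d a ^ 2 := by
        rw [ZMod.sum_range_natCast n fun a => d (k + a) ^ 2]
        exact congrArg _ (Equiv.sum_comp (Equiv.addLeft k) fun a => d a ^ 2)

section Grid

variable {n : ℕ} [NeZero n] (E : ZMod n → ZMod n → ℝ)

theorem mul_sq_sub_le_sum_D1_sq (i k j : ZMod n) :
    n * (E i j - E k j) ^ 2 ≤ ∑ a, D1 n E a j ^ 2 := by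
  have h := ZMod.sq_sub_le_mul_sum_sq_sub (fun x => E x j) i k
  simp only [D1, mul_pow, ← mul_sum]
  nlinarith [(Nat.cast_pos (α := ℝ)).mpr (NeZero.pos n)]

theorem mul_sq_sub_le_sum_D2_sq (k j l : ZMod n) :
    n * (E k j - E k l) ^ 2 ≤ ∑ b, D2 n E k b ^ 2 := by
  have h := ZMod.sq_sub_le_mul_sum_sq_sub (E k) j l
  simp only [D2, mul_pow, ← mul_sum]
  nlinarith [(Nat.cast_pos (α := ℝ)).mpr (NeZero.pos n)]

theorem mul_sq_sub_le_sum_D1_sq_add_sum_D2_sq (i j k l : ZMod n) :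
    n * (E i j - E k l) ^ 2 ≤ 2 * (∑ a, D1 n E a j ^ 2 + ∑ b, D2 n E k b ^ 2) := by
  have h1 := mul_sq_sub_le_sum_D1_sq E i k j
  have h2 := mul_sq_sub_le_sum_D2_sq E k j l
  have hn : (0 : ℝ) ≤ n := Nat.cast_nonneg n
  nlinarith [mul_nonneg hn (sq_nonneg (E i j - 2 * E k j + E k l))]

theorem sum_sq_le_sum_D1_sq_add_D2_sq (hE : ∑ i, ∑ j, E i j = 0) :
    ∑ i, ∑ j, E i j ^ 2 ≤ ∑ i, ∑ j, (D1 n E i j ^ 2 + D2 n E i j ^ 2) := by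
  have hvar : ∑ i, ∑ j, ∑ k, ∑ l, (E i j - E k l) ^ 2 = 2 * n ^ 2 * ∑ i, ∑ j, E i j ^ 2 := by
    have := sum_sum_sub_sq univ fun p : ZMod n × ZMod n => E p.1 p.2
    simp only [Fintype.sum_prod_type, hE, card_univ, Fintype.card_prod, ZMod.card] at this
    rw [this]; push_cast; ring
  have hgrad : ∑ i, ∑ j, ∑ k, ∑ l, n * (E i j - E k l) ^ 2
      ≤ 2 * n ^ 3 * ∑ i, ∑ j, (D1 n E i j ^ 2 + D2 n E i j ^ 2) := by
    calc _ ≤ ∑ i : ZMod n, ∑ j, ∑ k : ZMod n, ∑ _l : ZMod n,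
          2 * (∑ a, D1 n E a j ^ 2 + ∑ b, D2 n E k b ^ 2) :=
          sum_le_sum fun i _ => sum_le_sum fun j _ => sum_le_sum fun k _ =>
            sum_le_sum fun l _ => mul_sq_sub_le_sum_D1_sq_add_sum_D2_sq E i j k l
      _ = _ := by
          simp only [sum_const, card_univ, ZMod.card, nsmul_eq_mul, mul_add, sum_add_distrib,
            ← mul_sum, sum_comm (γ := ZMod n) (f := fun i j => D1 n E i j ^ 2)]
          ring
  have hn : (0 : ℝ) < n := Nat.cast_pos.mpr (NeZero.pos n)
  simp only [← mul_sum, hvar] at hgrad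
  nlinarith [pow_pos hn 3]

end Grid

/-- Discrete Poincaré inequality on the periodic grid `(ZMod n)²` with constant
independent of the mesh size. -/
theorem stmt15 :
    ∃ C > (0 : ℝ), ∀ (n : ℕ) [NeZero n], ∀ E : ZMod n → ZMod n → ℝ,
      (∑ i : ZMod n, ∑ j : ZMod n, E i j) = 0 →
      (∑ i : ZMod n, ∑ j : ZMod n, (E i j) ^ 2)
        ≤ C * ∑ i : ZMod n, ∑ j : ZMod n, ((D1 n E i j) ^ 2 + (D2 n E i j) ^ 2) :=
  ⟨1, one_pos, fun _ _ E hE => by simpa using sum_sq_le_sum_D1_sq_add_D2_sq E hE⟩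
end
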